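/- Quadratic spatial decay of the low-frequency kernel (intermediate estimate in the proof of Lemma 3.3): there exist C₀ ≥ 1 and C>0 such that for every t ∈ [0,1] and every x̄=(x,y,z) ∈ ℝ³ with |x| ≥ C₀, |I₀(t,x̄)| ≤ C |x|^{-2}, where I₀(t,x̄) = ∫_{ℝ³} e^{i(x̄·ξ̄ + tω(ξ̄))} p(ξ̄) dξ̄. -/

import Mathlib

open MeasureTheory Real Filter
open scoped ENNReal

noncomputable section

/-- Euclidean dot product on ℝ³ (realized as ℝ × ℝ × ℝ). -/
def dot3 (a b : ℝ × ℝ × ℝ) : ℝ := a.1 * b.1 + a.2.1 * b.2.1 + a.2.2 * b.2.2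

/-- Euclidean norm on ℝ³. -/
def en3 (ξ : ℝ × ℝ × ℝ) : ℝ := Real.sqrt (dot3 ξ ξ)

/-- The Zakharov–Kuznetsov dispersion relation ω(ξ,η,μ) = ξ(ξ²+η²+μ²). -/
def omega3 (ξ : ℝ × ℝ × ℝ) : ℝ := ξ.1 * (ξ.1 ^ 2 + ξ.2.1 ^ 2 + ξ.2.2 ^ 2)

/-- Fourier transform on ℝ³, with normalization (2π)⁻³ ∫ e^{-i x·ξ} φ(x) dx. -/
def FT3 (φ : ℝ × ℝ × ℝ → ℂ) (ξ : ℝ × ℝ × ℝ) : ℂ :=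
  ((((2 * π) ^ 3)⁻¹ : ℝ) : ℂ) * ∫ x : ℝ × ℝ × ℝ, Complex.exp (-Complex.I * (dot3 x ξ : ℂ)) * φ x

/-- Inverse Fourier transform on ℝ³: ∫ e^{i x·ξ} g(ξ) dξ. -/
def invFT3 (g : ℝ × ℝ × ℝ → ℂ) (x : ℝ × ℝ × ℝ) : ℂ :=
  ∫ ξ : ℝ × ℝ × ℝ, Complex.exp (Complex.I * (dot3 x ξ : ℂ)) * g ξ

/-- The free Zakharov–Kuznetsov evolution U(t)φ(x̄) = ∫ e^{i(x̄·ξ̄ + tω(ξ̄))} φ̂(ξ̄) dξ̄. -/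
def U3 (φ : ℝ × ℝ × ℝ → ℂ) (t : ℝ) (x : ℝ × ℝ × ℝ) : ℂ :=
  ∫ ξ : ℝ × ℝ × ℝ, Complex.exp (Complex.I * ((dot3 x ξ + t * omega3 ξ : ℝ) : ℂ)) * FT3 φ ξ

/-- L² norm on ℝ³. -/
def L2norm3 (φ : ℝ × ℝ × ℝ → ℂ) : ℝ := Real.sqrt (∫ x : ℝ × ℝ × ℝ, ‖φ x‖ ^ 2)

/-- j-th coordinate of a point of ℝ³. -/
def coord3 (j : Fin 3) (ξ : ℝ × ℝ × ℝ) : ℝ := ![ξ.1, ξ.2.1, ξ.2.2] j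

/-- Littlewood–Paley ring cutoff δ_k(ξ̄) = p(2^{-k-1}ξ̄) − p(2^{-k}ξ̄) on ℝ³. -/
def delta3 (p : ℝ × ℝ × ℝ → ℝ) (k : ℤ) (ξ : ℝ × ℝ × ℝ) : ℝ :=
  p ((2:ℝ) ^ (-k-1) • ξ) - p ((2:ℝ) ^ (-k) • ξ)

/-- 1D rescaled cutoff p_k(ξ) = p(2^{-k}ξ). -/
def pk1 (p : ℝ → ℝ) (k : ℤ) (ξ : ℝ) : ℝ := p ((2:ℝ) ^ (-k) * ξ)

/-- 1D ring cutoff δ_k(ξ) = p(2^{-k-1}ξ) − p(2^{-k}ξ). -/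
def dk1 (p : ℝ → ℝ) (k : ℤ) (ξ : ℝ) : ℝ := p ((2:ℝ) ^ (-k-1) * ξ) - p ((2:ℝ) ^ (-k) * ξ)

/-- Oscillatory integral I with three 1D symbols:
I(t,x̄) = ∫ e^{i(x̄·ξ̄+tω(ξ̄))} ψ₁(ξ)ψ₂(η)ψ₃(μ) dξ̄. -/
def oscI (ψ₁ ψ₂ ψ₃ : ℝ → ℝ) (t : ℝ) (x : ℝ × ℝ × ℝ) : ℂ :=
  ∫ ξ : ℝ × ℝ × ℝ, Complex.exp (Complex.I * ((dot3 x ξ + t * omega3 ξ : ℝ) : ℂ)) *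
    ((ψ₁ ξ.1 * ψ₂ ξ.2.1 * ψ₃ ξ.2.2 : ℝ) : ℂ)

lemma intZ {F F' : ℝ → ℂ} (hd : ∀ x, HasDerivAt F (F' x) x) (hc : Continuous F')
    (hs : HasCompactSupport F) : ∫ x : ℝ, F' x = 0 := by
  have hdF : deriv F = F' := funext fun x => (hd x).deriv
  have hC1 : ContDiff ℝ 1 F := contDiff_one_iff_deriv.mpr
    ⟨fun x => (hd x).differentiableAt, hdF ▸ hc⟩
  have hint : Integrable (deriv F) := by
    rw [hdF]
    exact hc.integrable_of_hasCompactSupport (hdF ▸ hs.deriv)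
  have h1 := hs.integral_Iic_deriv_eq hC1 0
  have h2 := hs.integral_Ioi_deriv_eq hC1 0
  calc ∫ x : ℝ, F' x = ∫ x : ℝ, deriv F x := by rw [hdF]
    _ = (∫ x in Set.Iic (0:ℝ), deriv F x) + ∫ x in Set.Ioi (0:ℝ), deriv F x := by
        rw [intervalIntegral.integral_Iic_add_Ioi hint.integrableOn hint.integrableOn]
    _ = 0 := by rw [h1, h2]; ring

/-- Integration by parts for oscillatory integrals with compactly supported amplitude. -/
lemma ibp {φ φ1 : ℝ → ℝ} {h h1 : ℝ → ℂ}
    (hφ : ∀ ξ, HasDerivAt φ (φ1 ξ) ξ) (hφc : Continuous φ1)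
    (hh : ∀ ξ, HasDerivAt h (h1 ξ) ξ) (hh1c : Continuous h1)
    (hcs : HasCompactSupport h) :
    ∫ ξ : ℝ, Complex.exp (Complex.I * ((φ ξ : ℝ) : ℂ)) * (Complex.I * ((φ1 ξ : ℝ) : ℂ) * h ξ)
      = - ∫ ξ : ℝ, Complex.exp (Complex.I * ((φ ξ : ℝ) : ℂ)) * h1 ξ := by
  have hhc : Continuous h := by
    rw [continuous_iff_continuousAt]; exact fun ξ => (hh ξ).continuousAt
  have hφcont : Continuous φ := by
    rw [continuous_iff_continuousAt]; exact fun ξ => (hφ ξ).continuousAt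
  have hec : Continuous fun ξ : ℝ => Complex.exp (Complex.I * ((φ ξ : ℝ) : ℂ)) := by
    exact Complex.continuous_exp.comp (continuous_const.mul (Complex.continuous_ofReal.comp hφcont))
  set E : ℝ → ℂ := fun ξ => Complex.exp (Complex.I * ((φ ξ : ℝ) : ℂ)) with hE
  have hdE : ∀ ξ, HasDerivAt E (E ξ * (Complex.I * ((φ1 ξ : ℝ) : ℂ))) ξ := fun ξ =>
    (((hφ ξ).ofReal_comp.const_mul Complex.I)).cexp
  set A : ℝ → ℂ := fun ξ => E ξ * (Complex.I * ((φ1 ξ : ℝ) : ℂ) * h ξ) with hA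
  set B : ℝ → ℂ := fun ξ => E ξ * h1 ξ with hB
  have hdF : ∀ ξ, HasDerivAt (fun ξ => E ξ * h ξ) (A ξ + B ξ) ξ := by
    intro ξ
    have := (hdE ξ).mul (hh ξ)
    refine this.congr_deriv ?_
    simp only [hA, hB, hE]; ring
  have hAc : Continuous A := by
    apply hec.mul; exact (continuous_const.mul (Complex.continuous_ofReal.comp hφc)).mul hhc
  have hBc : Continuous B := hec.mul hh1c
  have hcsF : HasCompactSupport (fun ξ => E ξ * h ξ) := hcs.mul_left
  have hz : ∫ ξ : ℝ, (A ξ + B ξ) = 0 := intZ hdF (hAc.add hBc) hcsF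
  have hAi : Integrable A := hAc.integrable_of_hasCompactSupport (by
    apply HasCompactSupport.mul_left
    exact (hcs.mul_left : HasCompactSupport fun ξ => Complex.I * ((φ1 ξ : ℝ) : ℂ) * h ξ))
  have hh1cs : HasCompactSupport h1 := by
    have : deriv h = h1 := funext fun ξ => (hh ξ).deriv
    exact this ▸ hcs.deriv
  have hBi : Integrable B := hBc.integrable_of_hasCompactSupport hh1cs.mul_left
  rw [integral_add hAi hBi] at hz
  have : ∫ ξ : ℝ, A ξ = - ∫ ξ : ℝ, B ξ := by linear_combination hz
  exact this

/-- Quotient rule, valid also where the denominator vanishes provided the numerator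
vanishes in a neighborhood of any zero of the denominator. -/
lemma Ldiv {u u' c c' : ℝ → ℂ}
    (hu : ∀ ξ, HasDerivAt u (u' ξ) ξ) (hc : ∀ ξ, HasDerivAt c (c' ξ) ξ)
    (hz : ∀ ξ, c ξ = 0 → ∀ᶠ ζ in nhds ξ, u ζ = 0) (ξ : ℝ) :
    HasDerivAt (fun ζ => u ζ / c ζ) ((u' ξ * c ξ - u ξ * c' ξ) / (c ξ) ^ 2) ξ := by
  by_cases h0 : c ξ = 0
  · have hev : (fun ζ => u ζ / c ζ) =ᶠ[nhds ξ] fun _ => (0:ℂ) :=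
      (hz ξ h0).mono fun ζ hζ => by simp [hζ]
    have : HasDerivAt (fun ζ => u ζ / c ζ) 0 ξ :=
      (hasDerivAt_const ξ (0:ℂ)).congr_of_eventuallyEq hev
    convert this using 1
    simp [h0]
  · exact (hu ξ).div (hc ξ) h0

/-- Continuity of a quotient, with the same caveat. -/
lemma Lc {u c : ℝ → ℂ} (hu : Continuous u) (hc : Continuous c)
    (hz : ∀ ξ, c ξ = 0 → ∀ᶠ ζ in nhds ξ, u ζ = 0) :
    Continuous fun ζ => u ζ / c ζ := by
  rw [continuous_iff_continuousAt]
  intro ξ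
  by_cases h0 : c ξ = 0
  · have hev : (fun ζ => u ζ / c ζ) =ᶠ[nhds ξ] fun _ => (0:ℂ) :=
      (hz ξ h0).mono fun ζ hζ => by simp [hζ]
    exact hev.continuousAt
  · exact hu.continuousAt.div hc.continuousAt h0

lemma normdivsq (N c : ℂ) : ‖N / c ^ 2‖ = ‖N‖ * (‖c‖⁻¹) ^ 2 := by
  rw [norm_div, norm_pow, div_eq_mul_inv, inv_pow]

lemma contOf {f f' : ℝ → ℂ} (h : ∀ ξ, HasDerivAt f (f' ξ) ξ) : Continuous f := by
  rw [continuous_iff_continuousAt]; exact fun ξ => (h ξ).continuousAt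

set_option maxHeartbeats 2000000 in
lemma osc_bound (M Mρ : ℝ) (hM : 1 ≤ M) (hMρ : 1 ≤ Mρ)
    (t x b s : ℝ) (ht0 : 0 ≤ t) (ht1 : t ≤ 1) (hs0 : 0 ≤ s) (hs4 : s ≤ 4) (hx : 64 ≤ |x|)
    (a a1 a2 : ℝ → ℂ)
    (ha : ∀ ξ, HasDerivAt a (a1 ξ) ξ) (ha1 : ∀ ξ, HasDerivAt a1 (a2 ξ) ξ)
    (ha2c : Continuous a2)
    (haz : ∀ ξ : ℝ, 2 < |ξ| → a ξ = 0)
    (hab : ∀ ξ, ‖a ξ‖ ≤ M ∧ ‖a1 ξ‖ ≤ M ∧ ‖a2 ξ‖ ≤ M)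
    (ρ0 ρ1 ρ2 : ℝ → ℂ)
    (hρ : ∀ ξ, HasDerivAt ρ0 (ρ1 ξ) ξ) (hρ1 : ∀ ξ, HasDerivAt ρ1 (ρ2 ξ) ξ)
    (hρ2c : Continuous ρ2)
    (hρone : ∀ ξ : ℝ, |ξ| ≤ 2 → ρ0 ξ = 1)
    (hρz : ∀ ξ : ℝ, 3 < |ξ| → ρ0 ξ = 0 ∧ ρ1 ξ = 0 ∧ ρ2 ξ = 0)
    (hρb : ∀ ξ, ‖ρ0 ξ‖ ≤ Mρ ∧ ‖ρ1 ξ‖ ≤ Mρ ∧ ‖ρ2 ξ‖ ≤ Mρ) :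
    ‖∫ ξ : ℝ, Complex.exp (Complex.I * ((x * ξ + b + t * (ξ ^ 3 + s * ξ) : ℝ) : ℂ)) * a ξ‖
      ≤ 27024 * (M * Mρ) / x ^ 2 := by
  have hx0 : (0:ℝ) < |x| := by linarith
  -- phase and its derivatives
  set φ : ℝ → ℝ := fun ξ => x * ξ + b + t * (ξ ^ 3 + s * ξ) with hφdef
  set φ1 : ℝ → ℝ := fun ξ => x + t * (3 * ξ ^ 2 + s) with hφ1def
  set φ2 : ℝ → ℝ := fun ξ => t * (6 * ξ) with hφ2def
  have hφ : ∀ ξ, HasDerivAt φ (φ1 ξ) ξ := by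
    intro ξ
    have h1 : HasDerivAt (fun ξ : ℝ => ξ ^ 3 + s * ξ) (3 * ξ ^ 2 + s) ξ := by
      simpa [Pi.add_def] using (hasDerivAt_pow 3 ξ).add ((hasDerivAt_id ξ).const_mul s)
    simpa [hφdef, hφ1def, Pi.add_def] using
      (((hasDerivAt_id ξ).const_mul x).add_const b).add (h1.const_mul t)
  have hφ1 : ∀ ξ, HasDerivAt φ1 (φ2 ξ) ξ := by
    intro ξ
    have h1 : HasDerivAt (fun ξ : ℝ => 3 * ξ ^ 2 + s) (6 * ξ) ξ := by
      refine (((hasDerivAt_pow 2 ξ).const_mul (3:ℝ)).add_const s).congr_deriv ?_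
      push_cast; ring
    simpa [hφ1def, hφ2def, Pi.add_def] using (hasDerivAt_const ξ x).add (h1.const_mul t)
  have hφ2 : ∀ ξ : ℝ, HasDerivAt φ2 (t * 6) ξ := by
    intro ξ
    simpa [hφ2def] using ((hasDerivAt_id ξ).const_mul (6:ℝ)).const_mul t
  have hφ1c : Continuous φ1 := by
    rw [continuous_iff_continuousAt]; exact fun ξ => (hφ1 ξ).continuousAt
  -- complex symbol c = i φ'
  set c : ℝ → ℂ := fun ξ => Complex.I * ((φ1 ξ : ℝ) : ℂ) with hcdef
  set c1 : ℝ → ℂ := fun ξ => Complex.I * ((φ2 ξ : ℝ) : ℂ) with hc1def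
  set c2 : ℝ → ℂ := fun _ => Complex.I * ((t * 6 : ℝ) : ℂ) with hc2def
  have hc : ∀ ξ, HasDerivAt c (c1 ξ) ξ := fun ξ => ((hφ1 ξ).ofReal_comp).const_mul Complex.I
  have hc1 : ∀ ξ, HasDerivAt c1 (c2 ξ) ξ := fun ξ => ((hφ2 ξ).ofReal_comp).const_mul Complex.I
  have hnormc : ∀ ξ, ‖c ξ‖ = |φ1 ξ| := by
    intro ξ; simp [hcdef, Real.norm_eq_abs]
  -- lower bound on the symbol on [-3,3]
  have hθ : ∀ ξ : ℝ, |ξ| ≤ 3 → 0 ≤ t * (3 * ξ ^ 2 + s) ∧ t * (3 * ξ ^ 2 + s) ≤ 31 := by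
    intro ξ hξ
    have h2 : ξ ^ 2 ≤ 9 := by nlinarith [abs_nonneg ξ, sq_abs ξ]
    constructor
    · positivity
    · nlinarith
  have key1 : ∀ ξ : ℝ, |ξ| ≤ 3 → |x| / 2 ≤ ‖c ξ‖ := by
    intro ξ hξ
    obtain ⟨h0, h31⟩ := hθ ξ hξ
    rw [hnormc]
    have := abs_add_le (x + t * (3 * ξ ^ 2 + s)) (-(t * (3 * ξ ^ 2 + s)))
    simp only [add_neg_cancel_right] at this
    have habs : |(-(t * (3 * ξ ^ 2 + s)))| ≤ 31 := by rw [abs_neg, abs_of_nonneg h0]; exact h31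
    simp only [hφ1def]
    linarith
  have key2 : ∀ ξ : ℝ, c ξ = 0 → 3 < |ξ| := by
    intro ξ h0
    have hφ10 : φ1 ξ = 0 := by
      have := mul_eq_zero.mp h0
      rcases this with h | h
      · exact absurd h Complex.I_ne_zero
      · exact_mod_cast h
    by_contra hle
    push_neg at hle
    obtain ⟨hn0, h31⟩ := hθ ξ hle
    simp only [hφ1def] at hφ10
    have : |x| ≤ 31 := by
      rw [abs_le]; constructor <;> nlinarith
    linarith
  have key2' : ∀ ξ : ℝ, |ξ| ≤ 3 → c ξ ≠ 0 := fun ξ h h0 => absurd (key2 ξ h0) (not_lt.mpr h)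
  have hev3 : ∀ ξ : ℝ, c ξ = 0 → ∀ᶠ ζ in nhds ξ, 3 < |ζ| := by
    intro ξ h0
    have hopen : IsOpen {ζ : ℝ | 3 < |ζ|} := isOpen_lt continuous_const continuous_abs
    exact hopen.eventually_mem (key2 ξ h0)
  -- the division machinery
  set d : ℝ → ℂ := fun ζ => ρ0 ζ / c ζ with hddef
  set d1 : ℝ → ℂ := fun ζ => (ρ1 ζ * c ζ - ρ0 ζ * c1 ζ) / (c ζ) ^ 2 with hd1def
  have hd : ∀ ξ, HasDerivAt d (d1 ξ) ξ :=
    Ldiv hρ hc fun ξ h0 => (hev3 ξ h0).mono fun ζ hζ => by simp [(hρz ζ hζ).1]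
  set u2 : ℝ → ℂ := fun ζ => ρ1 ζ * c ζ - ρ0 ζ * c1 ζ with hu2def
  set u2' : ℝ → ℂ := fun ζ => (ρ2 ζ * c ζ + ρ1 ζ * c1 ζ) - (ρ1 ζ * c1 ζ + ρ0 ζ * c2 ζ)
    with hu2'def
  have hu2 : ∀ ξ, HasDerivAt u2 (u2' ξ) ξ := fun ξ =>
    ((hρ1 ξ).mul (hc ξ)).sub ((hρ ξ).mul (hc1 ξ))
  set csq : ℝ → ℂ := fun ζ => (c ζ) ^ 2 with hcsqdef
  set csq' : ℝ → ℂ := fun ζ => c1 ζ * c ζ + c ζ * c1 ζ with hcsq'def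
  have hcsq : ∀ ξ, HasDerivAt csq (csq' ξ) ξ := by
    intro ξ
    have h2 : csq = fun ζ => c ζ * c ζ := by funext ζ; simp [hcsqdef, sq]
    rw [h2]; exact (hc ξ).mul (hc ξ)
  have hcsq0 : ∀ ξ, csq ξ = 0 → c ξ = 0 := fun ξ h => by
    simp only [hcsqdef] at h
    exact sq_eq_zero_iff.mp h
  set d2 : ℝ → ℂ := fun ζ => (u2' ζ * csq ζ - u2 ζ * csq' ζ) / (csq ζ) ^ 2 with hd2def
  have hu2van : ∀ ξ, csq ξ = 0 → ∀ᶠ ζ in nhds ξ, u2 ζ = 0 := by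
    intro ξ h0
    exact (hev3 ξ (hcsq0 ξ h0)).mono fun ζ hζ => by
      simp [hu2def, (hρz ζ hζ).1, (hρz ζ hζ).2.1]
  have hd1 : ∀ ξ, HasDerivAt d1 (d2 ξ) ξ := by
    have := Ldiv hu2 hcsq hu2van
    intro ξ
    exact this ξ
  -- amplitude times cutoff over symbol
  set h : ℝ → ℂ := fun ζ => a ζ * d ζ with hhdef
  set h1 : ℝ → ℂ := fun ζ => a1 ζ * d ζ + a ζ * d1 ζ with hh1def
  set h2f : ℝ → ℂ := fun ζ => (a2 ζ * d ζ + a1 ζ * d1 ζ) + (a1 ζ * d1 ζ + a ζ * d2 ζ)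
    with hh2fdef
  have hh : ∀ ξ, HasDerivAt h (h1 ξ) ξ := fun ξ => (ha ξ).mul (hd ξ)
  have hh1 : ∀ ξ, HasDerivAt h1 (h2f ξ) ξ := fun ξ =>
    ((ha1 ξ).mul (hd ξ)).add ((ha ξ).mul (hd1 ξ))
  -- vanishing for |ζ| > 3
  have hdz : ∀ ζ : ℝ, 3 < |ζ| → d ζ = 0 ∧ d1 ζ = 0 ∧ d2 ζ = 0 := by
    intro ζ hζ
    obtain ⟨z0, z1, z2⟩ := hρz ζ hζ
    refine ⟨by simp [hddef, z0], by simp [hd1def, z0, z1], ?_⟩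
    simp [hd2def, hu2def, hu2'def, z0, z1, z2]
  have hh1z : ∀ ζ : ℝ, 3 < |ζ| → h1 ζ = 0 := by
    intro ζ hζ
    obtain ⟨e0, e1, _⟩ := hdz ζ hζ
    simp [hh1def, e0, e1]
  have hh2fz : ∀ ζ : ℝ, 3 < |ζ| → h2f ζ = 0 := by
    intro ζ hζ
    obtain ⟨e0, e1, e2⟩ := hdz ζ hζ
    simp [hh2fdef, e0, e1, e2]
  set g : ℝ → ℂ := fun ζ => h1 ζ / c ζ with hgdef
  set g1 : ℝ → ℂ := fun ζ => (h2f ζ * c ζ - h1 ζ * c1 ζ) / (c ζ) ^ 2 with hg1def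
  have hg : ∀ ξ, HasDerivAt g (g1 ξ) ξ :=
    Ldiv hh1 hc fun ξ h0 => (hev3 ξ h0).mono fun ζ hζ => hh1z ζ hζ
  -- continuity
  have hac : Continuous a := contOf ha
  have ha1c : Continuous a1 := contOf ha1
  have hρ0c : Continuous ρ0 := contOf hρ
  have hρ1c : Continuous ρ1 := contOf hρ1
  have hcc : Continuous c := contOf hc
  have hc1c : Continuous c1 := contOf hc1
  have hdc : Continuous d := contOf hd
  have hd1c : Continuous d1 := contOf hd1
  have hu2c : Continuous u2 := (hρ1c.mul hcc).sub (hρ0c.mul hc1c)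
  have hu2'c : Continuous u2' := ((hρ2c.mul hcc).add (hρ1c.mul hc1c)).sub
    ((hρ1c.mul hc1c).add (hρ0c.mul continuous_const))
  have hcsqc : Continuous csq := hcc.pow 2
  have hcsq'c : Continuous csq' := (hc1c.mul hcc).add (hcc.mul hc1c)
  have hd2c : Continuous d2 := by
    apply Lc ((hu2'c.mul hcsqc).sub (hu2c.mul hcsq'c)) (hcsqc.pow 2)
    intro ξ h0
    have hc0 : c ξ = 0 := hcsq0 ξ (sq_eq_zero_iff.mp h0)
    exact (hev3 ξ hc0).mono fun ζ hζ => by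
      obtain ⟨z0, z1, z2⟩ := hρz ζ hζ
      simp [hu2def, hu2'def, z0, z1, z2]
  have hh1c : Continuous h1 := contOf hh1
  have hh2fc : Continuous h2f :=
    ((ha2c.mul hdc).add (ha1c.mul hd1c)).add ((ha1c.mul hd1c).add (hac.mul hd2c))
  have hg1c : Continuous g1 := by
    apply Lc ((hh2fc.mul hcc).sub (hh1c.mul hc1c)) (hcc.pow 2)
    intro ξ h0
    exact (hev3 ξ (sq_eq_zero_iff.mp h0)).mono fun ζ hζ => by
      simp [hh2fz ζ hζ, hh1z ζ hζ]
  -- compact supports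
  have hnot : ∀ (r ξ : ℝ), ξ ∉ Set.Icc (-r) r → r < |ξ| := fun r ξ hξ =>
    not_le.mp fun hle => hξ (by rw [Set.mem_Icc]; exact abs_le.mp hle)
  have hhcs : HasCompactSupport h :=
    HasCompactSupport.intro (isCompact_Icc (a := (-2:ℝ)) (b := 2)) fun ξ hξ => by
      simp [hhdef, haz ξ (hnot 2 ξ hξ)]
  have hgcs : HasCompactSupport g :=
    HasCompactSupport.intro (isCompact_Icc (a := (-3:ℝ)) (b := 3)) fun ξ hξ => by
      simp [hgdef, hh1z ξ (hnot 3 ξ hξ)]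
  -- pointwise identities
  have id1 : ∀ ξ, Complex.I * ((φ1 ξ : ℝ) : ℂ) * h ξ = a ξ := by
    intro ξ
    by_cases ha0 : a ξ = 0
    · simp [hhdef, ha0]
    · have h2 : |ξ| ≤ 2 := not_lt.mp fun hgt => ha0 (haz ξ hgt)
      have hcne : c ξ ≠ 0 := key2' ξ (by linarith)
      have hrfl : Complex.I * ((φ1 ξ : ℝ) : ℂ) = c ξ := rfl
      simp only [hhdef, hddef, hρone ξ h2, hrfl]
      field_simp
  have id2 : ∀ ξ, Complex.I * ((φ1 ξ : ℝ) : ℂ) * g ξ = h1 ξ := by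
    intro ξ
    by_cases hz0 : h1 ξ = 0
    · simp [hgdef, hz0]
    · have h3 : |ξ| ≤ 3 := not_lt.mp fun hgt => hz0 (hh1z ξ hgt)
      have hcne : c ξ ≠ 0 := key2' ξ h3
      have hrfl : Complex.I * ((φ1 ξ : ℝ) : ℂ) = c ξ := rfl
      simp only [hgdef, hrfl]
      field_simp
  -- IBP twice
  have step1 : ∫ ξ : ℝ, Complex.exp (Complex.I * ((φ ξ : ℝ) : ℂ)) * a ξ
      = - ∫ ξ : ℝ, Complex.exp (Complex.I * ((φ ξ : ℝ) : ℂ)) * h1 ξ := by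
    rw [show (fun ξ : ℝ => Complex.exp (Complex.I * ((φ ξ : ℝ) : ℂ)) * a ξ)
        = fun ξ : ℝ => Complex.exp (Complex.I * ((φ ξ : ℝ) : ℂ))
            * (Complex.I * ((φ1 ξ : ℝ) : ℂ) * h ξ) from funext fun ξ => by rw [id1 ξ]]
    exact ibp hφ hφ1c hh hh1c hhcs
  have step2 : ∫ ξ : ℝ, Complex.exp (Complex.I * ((φ ξ : ℝ) : ℂ)) * h1 ξ
      = - ∫ ξ : ℝ, Complex.exp (Complex.I * ((φ ξ : ℝ) : ℂ)) * g1 ξ := by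
    rw [show (fun ξ : ℝ => Complex.exp (Complex.I * ((φ ξ : ℝ) : ℂ)) * h1 ξ)
        = fun ξ : ℝ => Complex.exp (Complex.I * ((φ ξ : ℝ) : ℂ))
            * (Complex.I * ((φ1 ξ : ℝ) : ℂ) * g ξ) from funext fun ξ => by rw [id2 ξ]]
    exact ibp hφ hφ1c hg hg1c hgcs
  have keyid : ∫ ξ : ℝ, Complex.exp (Complex.I * ((φ ξ : ℝ) : ℂ)) * a ξ
      = ∫ ξ : ℝ, Complex.exp (Complex.I * ((φ ξ : ℝ) : ℂ)) * g1 ξ := by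
    rw [step1, step2, neg_neg]
  have hEnorm : ∀ ξ : ℝ, ‖Complex.exp (Complex.I * ((φ ξ : ℝ) : ℂ))‖ = 1 := by
    intro ξ
    rw [Complex.norm_exp]
    simp
  -- pointwise bound on g1
  have hptb : ∀ ξ : ℝ, ‖g1 ξ‖
      ≤ Set.indicator (Set.Icc (-3:ℝ) 3) (fun _ => 4504 * (M * Mρ) / x ^ 2) ξ := by
    intro ξ
    by_cases hmem : ξ ∈ Set.Icc (-3:ℝ) 3
    · rw [Set.indicator_of_mem hmem]
      have hξ3 : |ξ| ≤ 3 := by rw [abs_le]; exact Set.mem_Icc.mp hmem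
      obtain ⟨hb0, hb1, hb2⟩ := hρb ξ
      obtain ⟨haa0, haa1, haa2⟩ := hab ξ
      set cc : ℝ := ‖c ξ‖ with hccdef
      have hRcc : |x| / 2 ≤ cc := key1 ξ hξ3
      have hcc32 : (32:ℝ) ≤ cc := by linarith
      have hccpos : (0:ℝ) < cc := by linarith
      set e : ℝ := cc⁻¹ with hedef
      have he0 : (0:ℝ) ≤ e := by positivity
      have hce : cc * e = 1 := mul_inv_cancel₀ (ne_of_gt hccpos)
      have he1 : e ≤ 1 := by
        rw [hedef]
        rw [inv_le_one_iff₀]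
        right; linarith
      have hex : e ≤ 2 / |x| := by
        rw [hedef, show (2:ℝ)/|x| = (|x|/2)⁻¹ by rw [inv_div]]
        exact inv_anti₀ (by linarith) hRcc
      have hc1b : ‖c1 ξ‖ ≤ 18 := by
        have : ‖c1 ξ‖ = |φ2 ξ| := by simp [hc1def, Real.norm_eq_abs]
        rw [this]; simp only [hφ2def]
        have h6 : |t * (6 * ξ)| = t * (6 * |ξ|) := by
          rw [abs_mul, abs_of_nonneg ht0, abs_mul]; simp [abs_of_nonneg]
        rw [h6]; nlinarith [abs_nonneg ξ]
      have hc2b : ‖c2 ξ‖ ≤ 6 := by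
        have h1 : ‖c2 ξ‖ = |t * 6| := by
          show ‖Complex.I * ((t * 6 : ℝ) : ℂ)‖ = _
          rw [norm_mul, Complex.norm_I, one_mul, Complex.norm_real, Real.norm_eq_abs]
        rw [h1, abs_of_nonneg (by linarith)]; linarith
      -- bounds on d, d1, d2
      have ncc1 : (1:ℝ) ≤ cc := by linarith
      have nd : ‖d ξ‖ ≤ Mρ * e := by
        have : ‖d ξ‖ = ‖ρ0 ξ‖ * e := by
          rw [hedef, hccdef]
          show ‖ρ0 ξ / c ξ‖ = ‖ρ0 ξ‖ * ‖c ξ‖⁻¹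
          rw [norm_div, div_eq_mul_inv]
        rw [this]; exact mul_le_mul_of_nonneg_right hb0 he0
      have nu2 : ‖u2 ξ‖ ≤ 19 * Mρ * cc := by
        have h1 : ‖u2 ξ‖ ≤ Mρ * cc + Mρ * 18 := by
          refine (norm_sub_le _ _).trans (add_le_add ?_ ?_)
          · exact norm_mul_le_of_le hb1 le_rfl
          · exact norm_mul_le_of_le hb0 hc1b
        nlinarith
      have nd1 : ‖d1 ξ‖ ≤ 19 * Mρ * e := by
        have heq : ‖d1 ξ‖ = ‖u2 ξ‖ * e ^ 2 := by
          rw [hedef, hccdef]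
          show ‖(ρ1 ξ * c ξ - ρ0 ξ * c1 ξ) / c ξ ^ 2‖ = ‖u2 ξ‖ * (‖c ξ‖⁻¹) ^ 2
          rw [normdivsq]
        rw [heq]
        calc ‖u2 ξ‖ * e ^ 2 ≤ (19 * Mρ * cc) * e ^ 2 :=
              mul_le_mul_of_nonneg_right nu2 (by positivity)
          _ = (19 * Mρ) * (cc * e) * e := by ring
          _ = 19 * Mρ * e := by rw [hce]; ring
      have nu2' : ‖u2' ξ‖ ≤ Mρ * cc + 42 * Mρ := by
        have := norm_sub_le (ρ2 ξ * c ξ + ρ1 ξ * c1 ξ) (ρ1 ξ * c1 ξ + ρ0 ξ * c2 ξ)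
        refine le_trans (by exact this) ?_
        have p1 : ‖ρ2 ξ * c ξ + ρ1 ξ * c1 ξ‖ ≤ Mρ * cc + Mρ * 18 :=
          (norm_add_le _ _).trans (add_le_add (norm_mul_le_of_le hb2 le_rfl)
            (norm_mul_le_of_le hb1 hc1b))
        have p2 : ‖ρ1 ξ * c1 ξ + ρ0 ξ * c2 ξ‖ ≤ Mρ * 18 + Mρ * 6 :=
          (norm_add_le _ _).trans (add_le_add (norm_mul_le_of_le hb1 hc1b)
            (norm_mul_le_of_le hb0 hc2b))
        linarith
      have ncsq' : ‖csq' ξ‖ ≤ 36 * cc := by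
        have : ‖csq' ξ‖ ≤ 18 * cc + cc * 18 := by
          refine (norm_add_le _ _).trans (add_le_add ?_ ?_)
          · exact norm_mul_le_of_le hc1b le_rfl
          · exact norm_mul_le_of_le le_rfl hc1b
        linarith
      have ncsq : ‖csq ξ‖ = cc ^ 2 := by
        rw [hccdef]
        show ‖c ξ ^ 2‖ = ‖c ξ‖ ^ 2
        exact norm_pow _ 2
      have nnum2 : ‖u2' ξ * csq ξ - u2 ξ * csq' ξ‖ ≤ 727 * Mρ * cc ^ 3 := by
        have h1 : ‖u2' ξ * csq ξ‖ ≤ (Mρ * cc + 42 * Mρ) * cc ^ 2 := by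
          rw [norm_mul, ncsq]
          exact mul_le_mul_of_nonneg_right nu2' (by positivity)
        have h2 : ‖u2 ξ * csq' ξ‖ ≤ (19 * Mρ * cc) * (36 * cc) :=
          norm_mul_le_of_le nu2 ncsq'
        have h3 := norm_sub_le (u2' ξ * csq ξ) (u2 ξ * csq' ξ)
        have hMρ0 : (0:ℝ) ≤ Mρ := by linarith
        nlinarith [sq_nonneg cc, mul_le_mul_of_nonneg_left (mul_le_mul_of_nonneg_left ncc1 hMρ0) (le_of_lt hccpos)]
      have nd2 : ‖d2 ξ‖ ≤ 727 * Mρ * e := by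
        have heq : ‖d2 ξ‖ = ‖u2' ξ * csq ξ - u2 ξ * csq' ξ‖ * e ^ 4 := by
          have h1 : ‖d2 ξ‖ = ‖u2' ξ * csq ξ - u2 ξ * csq' ξ‖ * (‖csq ξ‖⁻¹) ^ 2 := by
            show ‖(u2' ξ * csq ξ - u2 ξ * csq' ξ) / csq ξ ^ 2‖ = _
            rw [normdivsq]
          rw [h1, ncsq, hedef]
          ring
        rw [heq]
        calc ‖u2' ξ * csq ξ - u2 ξ * csq' ξ‖ * e ^ 4 ≤ (727 * Mρ * cc ^ 3) * e ^ 4 :=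
              mul_le_mul_of_nonneg_right nnum2 (by positivity)
          _ = 727 * Mρ * ((cc * e) ^ 3) * e := by ring
          _ = 727 * Mρ * e := by rw [hce]; ring
      -- bounds on h1, h2f, g1
      have nh1 : ‖h1 ξ‖ ≤ 20 * (M * Mρ) * e := by
        have : ‖h1 ξ‖ ≤ M * (Mρ * e) + M * (19 * Mρ * e) :=
          (norm_add_le _ _).trans (add_le_add (norm_mul_le_of_le haa1 nd)
            (norm_mul_le_of_le haa0 nd1))
        linarith [this]
      have nh2f : ‖h2f ξ‖ ≤ 766 * (M * Mρ) * e := by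
        have p1 : ‖a2 ξ * d ξ + a1 ξ * d1 ξ‖ ≤ M * (Mρ * e) + M * (19 * Mρ * e) :=
          (norm_add_le _ _).trans (add_le_add (norm_mul_le_of_le haa2 nd)
            (norm_mul_le_of_le haa1 nd1))
        have p2 : ‖a1 ξ * d1 ξ + a ξ * d2 ξ‖ ≤ M * (19 * Mρ * e) + M * (727 * Mρ * e) :=
          (norm_add_le _ _).trans (add_le_add (norm_mul_le_of_le haa1 nd1)
            (norm_mul_le_of_le haa0 nd2))
        have := (norm_add_le (a2 ξ * d ξ + a1 ξ * d1 ξ) (a1 ξ * d1 ξ + a ξ * d2 ξ)).trans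
          (add_le_add p1 p2)
        calc ‖h2f ξ‖ ≤ M * (Mρ * e) + M * (19 * Mρ * e) + (M * (19 * Mρ * e) + M * (727 * Mρ * e)) := this
          _ = 766 * (M * Mρ) * e := by ring
      have heqg : ‖g1 ξ‖ = ‖h2f ξ * c ξ - h1 ξ * c1 ξ‖ * e ^ 2 := by
        rw [hedef, hccdef]
        show ‖(h2f ξ * c ξ - h1 ξ * c1 ξ) / c ξ ^ 2‖ = _
        rw [normdivsq]
      have hnumg : ‖h2f ξ * c ξ - h1 ξ * c1 ξ‖
          ≤ 766 * (M * Mρ) * e * cc + 20 * (M * Mρ) * e * 18 :=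
        (norm_sub_le _ _).trans (add_le_add (norm_mul_le_of_le nh2f le_rfl)
          (norm_mul_le_of_le nh1 hc1b))
      have hMM0 : (0:ℝ) ≤ M * Mρ := by nlinarith
      have hg1b : ‖g1 ξ‖ ≤ 1126 * (M * Mρ) * e ^ 2 := by
        rw [heqg]
        calc ‖h2f ξ * c ξ - h1 ξ * c1 ξ‖ * e ^ 2
            ≤ (766 * (M * Mρ) * e * cc + 360 * (M * Mρ) * e) * e ^ 2 := by
              refine mul_le_mul_of_nonneg_right ?_ (by positivity)
              linarith [hnumg]
          _ = 766 * (M * Mρ) * (cc * e) * e ^ 2 + 360 * (M * Mρ) * e ^ 3 := by ring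
          _ = 766 * (M * Mρ) * e ^ 2 + 360 * (M * Mρ) * e ^ 3 := by rw [hce]; ring
          _ ≤ 766 * (M * Mρ) * e ^ 2 + 360 * (M * Mρ) * e ^ 2 := by
              have : e ^ 3 ≤ e ^ 2 := by nlinarith
              nlinarith
          _ = 1126 * (M * Mρ) * e ^ 2 := by ring
      have hesq : e ^ 2 ≤ 4 / x ^ 2 := by
        have h1 : e ^ 2 ≤ (2 / |x|) ^ 2 := by
          exact pow_le_pow_left₀ he0 hex 2
        have h2 : (2 / |x|) ^ 2 = 4 / x ^ 2 := by
          rw [div_pow, sq_abs]; norm_num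
        linarith [h1, h2 ▸ h1]
      calc ‖g1 ξ‖ ≤ 1126 * (M * Mρ) * e ^ 2 := hg1b
        _ ≤ 1126 * (M * Mρ) * (4 / x ^ 2) := by
            exact mul_le_mul_of_nonneg_left hesq (by positivity)
        _ = 4504 * (M * Mρ) / x ^ 2 := by ring
    · rw [Set.indicator_of_notMem hmem]
      have h3 := hnot 3 ξ hmem
      have : g1 ξ = 0 := by simp [hg1def, hh1z ξ h3, hh2fz ξ h3]
      simp [this]
  -- integrability of the indicator bound
  have hGint : Integrable
      (Set.indicator (Set.Icc (-3:ℝ) 3) (fun _ => 4504 * (M * Mρ) / x ^ 2)) := by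
    rw [integrable_indicator_iff measurableSet_Icc]
    apply (integrableOn_const_iff).mpr
    right
    rw [Real.volume_Icc]
    exact ENNReal.ofReal_lt_top
  -- conclusion
  calc ‖∫ ξ : ℝ, Complex.exp (Complex.I * ((φ ξ : ℝ) : ℂ)) * a ξ‖
      = ‖∫ ξ : ℝ, Complex.exp (Complex.I * ((φ ξ : ℝ) : ℂ)) * g1 ξ‖ := by rw [keyid]
    _ ≤ ∫ ξ : ℝ, ‖Complex.exp (Complex.I * ((φ ξ : ℝ) : ℂ)) * g1 ξ‖ :=
        norm_integral_le_integral_norm _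
    _ = ∫ ξ : ℝ, ‖g1 ξ‖ := by
        congr 1
        funext ξ
        rw [norm_mul, hEnorm ξ, one_mul]
    _ ≤ ∫ ξ : ℝ, Set.indicator (Set.Icc (-3:ℝ) 3) (fun _ => 4504 * (M * Mρ) / x ^ 2) ξ :=
        integral_mono_of_nonneg (ae_of_all _ fun ξ => norm_nonneg _) hGint
          (ae_of_all _ hptb)
    _ = 27024 * (M * Mρ) / x ^ 2 := by
        rw [integral_indicator_const _ measurableSet_Icc]
        rw [measureReal_def, Real.volume_Icc]
        rw [show (3:ℝ) - (-3) = 6 by norm_num]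
        rw [ENNReal.toReal_ofReal (by norm_num : (0:ℝ) ≤ 6)]
        simp only [smul_eq_mul]
        ring

lemma derivZeroOn {f : ℝ → ℝ} {U : Set ℝ} (hU : IsOpen U) (h0 : ∀ x ∈ U, f x = 0) :
    ∀ x ∈ U, deriv f x = 0 := fun x hx => by
  have hev : f =ᶠ[nhds x] fun _ => 0 :=
    Filter.eventually_of_mem (hU.mem_nhds hx) h0
  rw [hev.deriv_eq]; exact deriv_const x 0

set_option maxHeartbeats 1000000 in
/-- Quadratic spatial decay of the low-frequency kernel: there are C₀ ≥ 1 and C > 0 with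
|I₀(t,x̄)| ≤ C |x|⁻² whenever t ∈ [0,1] and |x| ≥ C₀. -/
theorem I0_quadratic_decay
    (p : ℝ × ℝ × ℝ → ℝ) (hp_smooth : ContDiff ℝ (⊤ : ℕ∞) p) (hp_nonneg : ∀ ξ, 0 ≤ p ξ)
    (hp_one : ∀ ξ, en3 ξ ≤ 1 → p ξ = 1) (hp_zero : ∀ ξ, 2 ≤ en3 ξ → p ξ = 0) :
    ∃ C₀ : ℝ, 1 ≤ C₀ ∧ ∃ C : ℝ, 0 < C ∧ ∀ t : ℝ, 0 ≤ t → t ≤ 1 →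
      ∀ x y z : ℝ, C₀ ≤ |x| →
        ‖∫ ξ : ℝ × ℝ × ℝ,
            Complex.exp (Complex.I * ((dot3 (x, y, z) ξ + t * omega3 ξ : ℝ) : ℂ)) *
              ((p ξ : ℝ) : ℂ)‖ ≤ C / x ^ 2 := by
  have hp' : ContDiff ℝ ((⊤:ℕ∞) : WithTop ℕ∞) p := hp_smooth.of_le (by simp)
  have hpc : Continuous p := hp_smooth.continuous
  have hpd : Differentiable ℝ p := hp_smooth.differentiable (by simp)
  have hdotnn : ∀ u : ℝ × ℝ × ℝ, 0 ≤ dot3 u u := by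
    intro u; unfold dot3; nlinarith [sq_nonneg u.1, sq_nonneg u.2.1, sq_nonneg u.2.2]
  have hzero4 : ∀ u : ℝ × ℝ × ℝ, 4 ≤ dot3 u u → p u = 0 := by
    intro u hu
    apply hp_zero
    unfold en3
    calc (2:ℝ) = Real.sqrt 4 := by
          rw [show (4:ℝ) = 2 ^ 2 by norm_num, Real.sqrt_sq (by norm_num : (0:ℝ) ≤ 2)]
      _ ≤ Real.sqrt (dot3 u u) := Real.sqrt_le_sqrt hu
  -- the partial derivatives in the first variable
  set q1 : ℝ × ℝ × ℝ → ℝ := fun u => fderiv ℝ p u (1, 0, 0) with hq1def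
  have hq1s : ContDiff ℝ ((⊤:ℕ∞) : WithTop ℕ∞) q1 :=
    (contDiff_infty_iff_fderiv.mp hp').2.clm_apply contDiff_const
  have hq1d : Differentiable ℝ q1 := hq1s.differentiable (by simp)
  set q2 : ℝ × ℝ × ℝ → ℝ := fun u => fderiv ℝ q1 u (1, 0, 0) with hq2def
  have hq2s : ContDiff ℝ ((⊤:ℕ∞) : WithTop ℕ∞) q2 :=
    (contDiff_infty_iff_fderiv.mp hq1s).2.clm_apply contDiff_const
  -- the open region where everything vanishes
  have hUopen : IsOpen {u : ℝ × ℝ × ℝ | 4 < dot3 u u} := by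
    have : Continuous fun u : ℝ × ℝ × ℝ => dot3 u u := by unfold dot3; fun_prop
    exact isOpen_lt continuous_const this
  have hq1z : ∀ u : ℝ × ℝ × ℝ, 4 < dot3 u u → q1 u = 0 := by
    intro u hu
    have hev : p =ᶠ[nhds u] fun _ => 0 :=
      Filter.eventually_of_mem (hUopen.mem_nhds hu) fun v hv => hzero4 v (le_of_lt hv)
    rw [hq1def]
    simp only []
    rw [hev.fderiv_eq, fderiv_fun_const]
    simp
  have hq2z : ∀ u : ℝ × ℝ × ℝ, 4 < dot3 u u → q2 u = 0 := by
    intro u hu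
    have hev : q1 =ᶠ[nhds u] fun _ => 0 :=
      Filter.eventually_of_mem (hUopen.mem_nhds hu) fun v hv => hq1z v hv
    rw [hq2def]
    simp only []
    rw [hev.fderiv_eq, fderiv_fun_const]
    simp
  -- coordinatewise bound on the norm
  have hKp : ∀ u : ℝ × ℝ × ℝ, 2 < ‖u‖ → 4 < dot3 u u := by
    intro u h
    rw [Prod.norm_def, Prod.norm_def] at h
    unfold dot3
    rcases lt_max_iff.mp h with h1 | h2
    · rw [Real.norm_eq_abs] at h1
      nlinarith [sq_abs u.1, sq_nonneg u.2.1, sq_nonneg u.2.2, abs_nonneg u.1, sq_nonneg u.1]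
    · rcases lt_max_iff.mp h2 with h3 | h3 <;> rw [Real.norm_eq_abs] at h3
      · nlinarith [sq_abs u.2.1, sq_nonneg u.1, sq_nonneg u.2.2, abs_nonneg u.2.1]
      · nlinarith [sq_abs u.2.2, sq_nonneg u.1, sq_nonneg u.2.1, abs_nonneg u.2.2]
  have hCS : ∀ {g : ℝ × ℝ × ℝ → ℝ}, (∀ u, 4 < dot3 u u → g u = 0) → HasCompactSupport g := by
    intro g hg
    apply HasCompactSupport.intro (isCompact_closedBall (0 : ℝ × ℝ × ℝ) 2)
    intro u hu
    apply hg
    apply hKp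
    simpa [Metric.mem_closedBall, dist_zero_right] using hu
  -- global bounds
  obtain ⟨M0, hM0⟩ := (hCS fun u hu => hzero4 u hu.le).exists_bound_of_continuous hpc
  obtain ⟨M1, hM1⟩ := (hCS hq1z).exists_bound_of_continuous hq1s.continuous
  obtain ⟨M2, hM2⟩ := (hCS hq2z).exists_bound_of_continuous hq2s.continuous
  set M : ℝ := max 1 (max M0 (max M1 M2)) with hMdef
  have hM : 1 ≤ M := le_max_left _ _
  have hMa : ∀ u, |p u| ≤ M ∧ |q1 u| ≤ M ∧ |q2 u| ≤ M := by
    intro u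
    have h0 : |p u| ≤ M0 := by simpa [Real.norm_eq_abs] using hM0 u
    have h1 : |q1 u| ≤ M1 := by simpa [Real.norm_eq_abs] using hM1 u
    have h2 : |q2 u| ≤ M2 := by simpa [Real.norm_eq_abs] using hM2 u
    refine ⟨h0.trans ?_, h1.trans ?_, h2.trans ?_⟩
    · exact (le_max_left _ _).trans (le_max_right _ _)
    · exact ((le_max_left _ _).trans (le_max_right _ _)).trans (le_max_right _ _)
    · exact ((le_max_right _ _).trans (le_max_right _ _)).trans (le_max_right _ _)
  -- bump function on ℝ
  set f : ContDiffBump (0:ℝ) := ⟨2, 3, by norm_num, by norm_num⟩ with hfdef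
  have hfc : ContDiff ℝ ((⊤:ℕ∞) : WithTop ℕ∞) ⇑f := f.contDiff
  have hf1 := contDiff_infty_iff_deriv.mp hfc
  have hf2 := contDiff_infty_iff_deriv.mp hf1.2
  set ρr1 : ℝ → ℝ := deriv ⇑f with hρr1def
  set ρr2 : ℝ → ℝ := deriv ρr1 with hρr2def
  have hdf : ∀ ξ, HasDerivAt ⇑f (ρr1 ξ) ξ := fun ξ => (hf1.1 ξ).hasDerivAt
  have hdf1 : ∀ ξ, HasDerivAt ρr1 (ρr2 ξ) ξ := fun ξ => (hf2.1 ξ).hasDerivAt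
  have hUo : IsOpen {ξ : ℝ | 3 < |ξ|} := isOpen_lt continuous_const continuous_abs
  have hfz : ∀ ξ ∈ {ξ : ℝ | 3 < |ξ|}, f ξ = 0 := by
    intro ξ hξ
    apply f.zero_of_le_dist
    have : (3:ℝ) < |ξ| := hξ
    simp only [hfdef, Real.dist_eq, sub_zero]
    linarith
  have hρr1zz := derivZeroOn hUo hfz
  have hρr2zz := derivZeroOn hUo hρr1zz
  have hcsf : HasCompactSupport ⇑f := f.hasCompactSupport
  obtain ⟨B1, hB1⟩ := hcsf.deriv.exists_bound_of_continuous hf1.2.continuous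
  obtain ⟨B2, hB2⟩ := hcsf.deriv.deriv.exists_bound_of_continuous hf2.2.continuous
  set Mρ : ℝ := max 1 (max B1 B2) with hMρdef
  have hMρ : 1 ≤ Mρ := le_max_left _ _
  -- complex versions of the bump data
  set ρC0 : ℝ → ℂ := fun ξ => ((f ξ : ℝ) : ℂ) with hρC0def
  set ρC1 : ℝ → ℂ := fun ξ => ((ρr1 ξ : ℝ) : ℂ) with hρC1def
  set ρC2 : ℝ → ℂ := fun ξ => ((ρr2 ξ : ℝ) : ℂ) with hρC2def
  have hρA : ∀ ξ, HasDerivAt ρC0 (ρC1 ξ) ξ := fun ξ => (hdf ξ).ofReal_comp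
  have hρB : ∀ ξ, HasDerivAt ρC1 (ρC2 ξ) ξ := fun ξ => (hdf1 ξ).ofReal_comp
  have hρ2c : Continuous ρC2 := Complex.continuous_ofReal.comp hf2.2.continuous
  have hρone : ∀ ξ : ℝ, |ξ| ≤ 2 → ρC0 ξ = 1 := by
    intro ξ hξ
    have : f ξ = 1 := f.one_of_mem_closedBall (by
      simp only [Metric.mem_closedBall, Real.dist_eq, sub_zero, hfdef]
      exact hξ)
    simp [hρC0def, this]
  have hρz : ∀ ξ : ℝ, 3 < |ξ| → ρC0 ξ = 0 ∧ ρC1 ξ = 0 ∧ ρC2 ξ = 0 := by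
    intro ξ hξ
    refine ⟨?_, ?_, ?_⟩
    · simp [hρC0def, hfz ξ hξ]
    · simp [hρC1def]; exact_mod_cast hρr1zz ξ hξ
    · simp [hρC2def]; exact_mod_cast hρr2zz ξ hξ
  have hρb : ∀ ξ, ‖ρC0 ξ‖ ≤ Mρ ∧ ‖ρC1 ξ‖ ≤ Mρ ∧ ‖ρC2 ξ‖ ≤ Mρ := by
    intro ξ
    refine ⟨?_, ?_, ?_⟩
    · have : ‖ρC0 ξ‖ = |f ξ| := by simp [hρC0def, Real.norm_eq_abs]
      rw [this, abs_of_nonneg f.nonneg]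
      exact f.le_one.trans hMρ
    · have : ‖ρC1 ξ‖ = ‖ρr1 ξ‖ := by simp [hρC1def]
      rw [this]
      exact (hB1 ξ).trans ((le_max_left _ _).trans (le_max_right _ _))
    · have : ‖ρC2 ξ‖ = ‖ρr2 ξ‖ := by simp [hρC2def]
      rw [this]
      exact (hB2 ξ).trans ((le_max_right _ _).trans (le_max_right _ _))
  -- choose the constants
  refine ⟨64, by norm_num, 432384 * (M * Mρ), by nlinarith, ?_⟩
  intro t ht0 ht1 x y z hx
  have hxne : x ≠ 0 := by
    intro h; rw [h] at hx; simp at hx; linarith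
  have hx2 : (0:ℝ) < x ^ 2 := by positivity
  set F : ℝ × ℝ × ℝ → ℂ := fun u =>
    Complex.exp (Complex.I * ((dot3 (x, y, z) u + t * omega3 u : ℝ) : ℂ)) * ((p u : ℝ) : ℂ)
    with hFdef
  -- derivative of the amplitude in the first coordinate
  have hps : ∀ (η μ ξ : ℝ), HasDerivAt (fun ζ : ℝ => p (ζ, η, μ)) (q1 (ξ, η, μ)) ξ := by
    intro η μ ξ
    have hemb : HasDerivAt (fun ζ : ℝ => ((ζ, η, μ) : ℝ × ℝ × ℝ)) ((1, 0, 0) : ℝ × ℝ × ℝ) ξ :=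
      (hasDerivAt_id ξ).prodMk (hasDerivAt_const ξ (η, μ))
    exact ((hpd (ξ, η, μ)).hasFDerivAt).comp_hasDerivAt ξ hemb
  have hq1ds : ∀ (η μ ξ : ℝ), HasDerivAt (fun ζ : ℝ => q1 (ζ, η, μ)) (q2 (ξ, η, μ)) ξ := by
    intro η μ ξ
    have hemb : HasDerivAt (fun ζ : ℝ => ((ζ, η, μ) : ℝ × ℝ × ℝ)) ((1, 0, 0) : ℝ × ℝ × ℝ) ξ :=
      (hasDerivAt_id ξ).prodMk (hasDerivAt_const ξ (η, μ))
    exact ((hq1d (ξ, η, μ)).hasFDerivAt).comp_hasDerivAt ξ hemb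
  -- inner (ξ-integral) bound
  have hinner : ∀ η μ : ℝ, ‖∫ ξ : ℝ, F (ξ, η, μ)‖
      ≤ Set.indicator (Set.Icc (-2:ℝ) 2 ×ˢ Set.Icc (-2:ℝ) 2)
          (fun _ => 27024 * (M * Mρ) / x ^ 2) (η, μ) := by
    intro η μ
    by_cases hs : η ^ 2 + μ ^ 2 ≤ 4
    · have hmem : (η, μ) ∈ Set.Icc (-2:ℝ) 2 ×ˢ Set.Icc (-2:ℝ) 2 := by
        constructor
        · rw [Set.mem_Icc]; constructor <;> nlinarith [sq_nonneg μ, sq_nonneg η]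
        · rw [Set.mem_Icc]; constructor <;> nlinarith [sq_nonneg μ, sq_nonneg η]
      rw [Set.indicator_of_mem hmem]
      have hre : (fun ξ : ℝ => F (ξ, η, μ)) = fun ξ : ℝ =>
          Complex.exp (Complex.I *
            ((x * ξ + (y * η + z * μ) + t * (ξ ^ 3 + (η ^ 2 + μ ^ 2) * ξ) : ℝ) : ℂ)) *
          ((p (ξ, η, μ) : ℝ) : ℂ) := by
        funext ξ
        simp only [hFdef]
        have : dot3 (x, y, z) (ξ, η, μ) + t * omega3 (ξ, η, μ)
            = x * ξ + (y * η + z * μ) + t * (ξ ^ 3 + (η ^ 2 + μ ^ 2) * ξ) := by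
          unfold dot3 omega3; ring
        rw [this]
      rw [hre]
      refine osc_bound M Mρ hM hMρ t x (y * η + z * μ) (η ^ 2 + μ ^ 2) ht0 ht1
        (by positivity) hs hx _ _ _
        (fun ξ => (hps η μ ξ).ofReal_comp) (fun ξ => (hq1ds η μ ξ).ofReal_comp)
        (Complex.continuous_ofReal.comp (hq2s.continuous.comp (by fun_prop)))
        ?_ ?_ ρC0 ρC1 ρC2 hρA hρB hρ2c hρone hρz hρb
      · intro ξ hξ
        have : p (ξ, η, μ) = 0 := by
          apply hzero4
          unfold dot3
          simp only
          nlinarith [sq_abs ξ, sq_nonneg η, sq_nonneg μ, abs_nonneg ξ]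
        simp [this]
      · intro ξ
        obtain ⟨m0, m1, m2⟩ := hMa (ξ, η, μ)
        refine ⟨?_, ?_, ?_⟩ <;> simp [Complex.norm_real, Real.norm_eq_abs]
        exacts [m0, m1, m2]
    · have hFz : ∀ ξ : ℝ, F (ξ, η, μ) = 0 := by
        intro ξ
        have : p (ξ, η, μ) = 0 := by
          apply hzero4
          unfold dot3
          simp only
          nlinarith [sq_nonneg ξ]
        rw [hFdef]
        simp [this]
      simp only [hFz, integral_zero, norm_zero]
      exact Set.indicator_nonneg (fun _ _ => by positivity) _
  -- integrability of F
  have hdotc : Continuous fun u : ℝ × ℝ × ℝ => dot3 (x, y, z) u + t * omega3 u := by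
    unfold dot3 omega3; fun_prop
  have hFc : Continuous F := by
    rw [hFdef]
    exact (Complex.continuous_exp.comp
      (continuous_const.mul (Complex.continuous_ofReal.comp hdotc))).mul
      (Complex.continuous_ofReal.comp hpc)
  have hFcs : HasCompactSupport F := by
    apply HasCompactSupport.intro (isCompact_closedBall (0 : ℝ × ℝ × ℝ) 2)
    intro u hu
    have h4 : 4 < dot3 u u := hKp u (by
      simpa [Metric.mem_closedBall, dist_zero_right] using hu)
    rw [hFdef]
    simp [hzero4 u h4.le]
  have hFi : Integrable F := hFc.integrable_of_hasCompactSupport hFcs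
  -- Fubini
  have hprod : (volume : Measure (ℝ × (ℝ × ℝ))) = (volume : Measure ℝ).prod volume :=
    Measure.volume_eq_prod ℝ (ℝ × ℝ)
  have hFi' : Integrable F ((volume : Measure ℝ).prod (volume : Measure (ℝ × ℝ))) :=
    hprod ▸ hFi
  have hsplit : ∫ u : ℝ × ℝ × ℝ, F u = ∫ v : ℝ × ℝ, ∫ ξ : ℝ, F (ξ, v) := by
    calc ∫ u : ℝ × ℝ × ℝ, F u
        = ∫ u, F u ∂((volume : Measure ℝ).prod (volume : Measure (ℝ × ℝ))) := by
          rw [← hprod]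
      _ = ∫ ξ : ℝ, ∫ v : ℝ × ℝ, F (ξ, v) := integral_prod F hFi'
      _ = ∫ v : ℝ × ℝ, ∫ ξ : ℝ, F (ξ, v) := integral_integral_swap hFi'
  -- the indicator majorant
  set S : Set (ℝ × ℝ) := Set.Icc (-2:ℝ) 2 ×ˢ Set.Icc (-2:ℝ) 2 with hSdef
  have hSmeas : MeasurableSet S := measurableSet_Icc.prod measurableSet_Icc
  have hvolS : volume S = ENNReal.ofReal 16 := by
    rw [hSdef, Measure.volume_eq_prod, Measure.prod_prod, Real.volume_Icc,
      ← ENNReal.ofReal_mul (by norm_num)]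
    norm_num
  have hGint : Integrable (Set.indicator S fun _ => 27024 * (M * Mρ) / x ^ 2) := by
    rw [integrable_indicator_iff hSmeas]
    apply (integrableOn_const_iff).mpr
    right
    rw [hvolS]
    exact ENNReal.ofReal_lt_top
  calc ‖∫ u : ℝ × ℝ × ℝ, F u‖ = ‖∫ v : ℝ × ℝ, ∫ ξ : ℝ, F (ξ, v)‖ := by rw [hsplit]
    _ ≤ ∫ v : ℝ × ℝ, ‖∫ ξ : ℝ, F (ξ, v)‖ := norm_integral_le_integral_norm _
    _ ≤ ∫ v : ℝ × ℝ, Set.indicator S (fun _ => 27024 * (M * Mρ) / x ^ 2) v := by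
        refine integral_mono_of_nonneg (Filter.Eventually.of_forall fun v => norm_nonneg _)
          hGint (Filter.Eventually.of_forall fun v => ?_)
        obtain ⟨η, μ⟩ := v
        exact hinner η μ
    _ = 432384 * (M * Mρ) / x ^ 2 := by
        rw [integral_indicator_const _ hSmeas, measureReal_def, hvolS,
          ENNReal.toReal_ofReal (by norm_num : (0:ℝ) ≤ 16)]
        rw [smul_eq_mul]
        ring
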